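/- arXiv:2505.02614 — 2 statements merged into one kernel-verified Lean document; each statement's English description precedes it below -/
import Mathlib

section
/- For every x ∈ ℝ^n_+ and y ∈ ℝ^n_{++}, max{‖x‖₁, ‖y‖₁} ≤ 2·D_h(x,y) + 2·min{‖x‖₁, ‖y‖₁}. -/
open Finset Filter

/-- Bregman divergence generated by the negative entropy
`h(x) = ∑ i, x i * (log (x i) - 1)` (with the convention `0 * log 0 = 0`,
which holds automatically since `Real.log 0 = 0`). -/
noncomputable def Dh {n : ℕ} (x y : Fin n → ℝ) : ℝ :=
  ∑ i, (x i * Real.log (x i / y i) - x i + y i)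

/-- ℓ₁-norm of a vector. -/
noncomputable def l1 {n : ℕ} (x : Fin n → ℝ) : ℝ := ∑ i, |x i|

/-! Coordinatewise, the entropy Bregman term `a log (a/b) - a + b` dominates the squared Hellinger
distance `(√a - √b)²`; this is `log t ≥ 1 - 1/t` at `t = √(a/b)`. Since
`2 (√a - √b)² + 2a - b = (2√a - √b)² ≥ 0`, each coordinate of `y` is at most twice the Bregman
term plus twice the coordinate of `x`, and symmetrically. Summing, each of `‖x‖₁, ‖y‖₁` is at most
`2 D_h(x, y)` plus twice the other. -/

open Real

noncomputable def entropyBregman (a b : ℝ) : ℝ := a * log (a / b) - a + b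

theorem Dh_eq_sum_entropyBregman {n : ℕ} (x y : Fin n → ℝ) :
    Dh x y = ∑ i, entropyBregman (x i) (y i) := rfl

theorem l1_eq_sum_of_nonneg {n : ℕ} {x : Fin n → ℝ} (hx : ∀ i, 0 ≤ x i) : l1 x = ∑ i, x i :=
  sum_congr rfl fun i _ => abs_of_nonneg (hx i)

section entropyBregman

variable {a b : ℝ}

theorem sq_sqrt_sub_sqrt_le_entropyBregman (ha : 0 ≤ a) (hb : 0 < b) :
    (√a - √b) ^ 2 ≤ entropyBregman a b := by
  rw [entropyBregman]
  rcases ha.eq_or_lt with rfl | ha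
  · simp [sq_sqrt hb.le]
  have hlog : 1 - (√a / √b)⁻¹ ≤ log (a / b) / 2 := by
    rw [← sqrt_div' _ hb.le, ← log_sqrt (div_nonneg ha.le hb.le)]
    exact one_sub_inv_le_log_of_pos (by positivity)
  have hmul : a * (√a / √b)⁻¹ = √a * √b := by
    rw [inv_div, mul_div_assoc', div_eq_iff (by positivity)]
    linear_combination -√b * sq_sqrt ha.le
  have := mul_le_mul_of_nonneg_left hlog (by positivity : 0 ≤ 2 * a)
  nlinarith [sq_sqrt ha.le, sq_sqrt hb.le]

theorem le_two_mul_entropyBregman_add_two_mul_left (ha : 0 ≤ a) (hb : 0 < b) :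
    b ≤ 2 * entropyBregman a b + 2 * a := by
  nlinarith [sq_sqrt_sub_sqrt_le_entropyBregman ha hb, sq_nonneg (2 * √a - √b),
    sq_sqrt ha, sq_sqrt hb.le]

theorem le_two_mul_entropyBregman_add_two_mul_right (ha : 0 ≤ a) (hb : 0 < b) :
    a ≤ 2 * entropyBregman a b + 2 * b := by
  nlinarith [sq_sqrt_sub_sqrt_le_entropyBregman ha hb, sq_nonneg (√a - 2 * √b),
    sq_sqrt ha, sq_sqrt hb.le]

end entropyBregman

section l1

variable {n : ℕ} {x y : Fin n → ℝ}

theorem l1_le_two_mul_Dh_add_two_mul_l1_left (hx : ∀ i, 0 ≤ x i) (hy : ∀ i, 0 < y i) :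
    l1 y ≤ 2 * Dh x y + 2 * l1 x := by
  rw [l1_eq_sum_of_nonneg hx, l1_eq_sum_of_nonneg fun i => (hy i).le, Dh_eq_sum_entropyBregman,
    mul_sum, mul_sum, ← sum_add_distrib]
  exact sum_le_sum fun i _ => le_two_mul_entropyBregman_add_two_mul_left (hx i) (hy i)

theorem l1_le_two_mul_Dh_add_two_mul_l1_right (hx : ∀ i, 0 ≤ x i) (hy : ∀ i, 0 < y i) :
    l1 x ≤ 2 * Dh x y + 2 * l1 y := by
  rw [l1_eq_sum_of_nonneg hx, l1_eq_sum_of_nonneg fun i => (hy i).le, Dh_eq_sum_entropyBregman,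
    mul_sum, mul_sum, ← sum_add_distrib]
  exact sum_le_sum fun i _ => le_two_mul_entropyBregman_add_two_mul_right (hx i) (hy i)

end l1

/-- For every `x ∈ ℝⁿ₊` and `y ∈ ℝⁿ₊₊`,
`max {‖x‖₁, ‖y‖₁} ≤ 2 D_h(x,y) + 2 min {‖x‖₁, ‖y‖₁}`. -/
theorem max_l1_le_two_Dh_add_two_min_l1 {n : ℕ} (x y : Fin n → ℝ)
    (hx : ∀ i, 0 ≤ x i) (hy : ∀ i, 0 < y i) :
    max (l1 x) (l1 y) ≤ 2 * Dh x y + 2 * min (l1 x) (l1 y) := by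
  rcases le_total (l1 x) (l1 y) with h | h
  · rw [max_eq_right h, min_eq_left h]
    exact l1_le_two_mul_Dh_add_two_mul_l1_left hx hy
  · rw [max_eq_left h, min_eq_right h]
    exact l1_le_two_mul_Dh_add_two_mul_l1_right hx hy
end

section
/- (Lower bound on the Polyak-type stepsize) Let A ∈ ℝ^{m×n} with A ≠ 0, b ∈ ℝ^m, f(x) = (1/2)‖Ax − b‖₂², and let z ∈ S₊. Let x ∈ ℝ^n_{++} with ∇f(x) ≠ 0 and α = min{ f(x)/‖∇f(x)‖²_x , 1.79/‖∇f(x)‖_∞ }. Then α ≥ 1 / ( 4·C_A²·( D_h(z,x) + ‖z‖₁ ) ), where C_A = max_{1≤j≤n} ‖A_{:j}‖₂ is the maximum Euclidean column norm of A. -/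
open Finset Filter

/-- Objective `f(x) = (1/2) ‖Ax - b‖₂²`. -/
noncomputable def fobj {m n : ℕ} (A : Matrix (Fin m) (Fin n) ℝ) (b : Fin m → ℝ)
    (x : Fin n → ℝ) : ℝ := (1 / 2) * ∑ j, ((A.mulVec x - b) j) ^ 2

/-- Gradient `∇f(x) = Aᵀ (Ax - b)` of `f(x) = (1/2)‖Ax - b‖₂²`. -/
noncomputable def gradf {m n : ℕ} (A : Matrix (Fin m) (Fin n) ℝ) (b : Fin m → ℝ)
    (x : Fin n → ℝ) : Fin n → ℝ := A.transpose.mulVec (A.mulVec x - b)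

/-- Maximum norm `‖v‖_∞`. -/
noncomputable def linfty {n : ℕ} [NeZero n] (v : Fin n → ℝ) : ℝ :=
  Finset.univ.sup' Finset.univ_nonempty fun i => |v i|

/-- Weighted squared norm `‖v‖²_x = ∑ i, x i * (v i)²`. -/
noncomputable def wnormSq {n : ℕ} (x v : Fin n → ℝ) : ℝ := ∑ i, x i * (v i) ^ 2

/-- The Polyak-type stepsize `min { f(x)/‖∇f(x)‖²_x , 1.79/‖∇f(x)‖_∞ }`. -/
noncomputable def polyakStep {m n : ℕ} [NeZero n] (A : Matrix (Fin m) (Fin n) ℝ)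
    (b : Fin m → ℝ) (x : Fin n → ℝ) : ℝ :=
  min (fobj A b x / wnormSq x (gradf A b x)) (1.79 / linfty (gradf A b x))

/-- Maximum Euclidean column norm `C_A = max_j ‖A_{:j}‖₂`. -/
noncomputable def colNormMax {m n : ℕ} [NeZero n] (A : Matrix (Fin m) (Fin n) ℝ) : ℝ :=
  Finset.univ.sup' Finset.univ_nonempty fun j => Real.sqrt (∑ i, (A i j) ^ 2)

/-! The entropy inequality `a log (a / b) ≥ -b / 2` gives `∑ xᵢ ≤ 2S` for `S = D_h(z,x) + ‖z‖₁`,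
hence `‖x - z‖₁ ≤ 3S`. As `Az = b`, the residual `r = A(x - z)` satisfies
`‖r‖₂ ≤ C_A ‖x - z‖₁ ≤ 3 C_A S`, and Cauchy–Schwarz gives `|∇f(x)_j| ≤ C_A ‖r‖₂`. Therefore
`‖∇f(x)‖²_x ≤ (∑ xᵢ) C_A² ‖r‖₂² ≤ 4 C_A² S f(x)` and `‖∇f(x)‖_∞ ≤ 3 C_A² S ≤ 4 · 1.79 C_A² S`. -/

open Real Matrix

lemma Real.log_le_half_self {y : ℝ} (hy : 0 < y) : log y ≤ y / 2 := by
  have h := add_one_le_exp (log y - 1)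
  rw [exp_sub, exp_log hy, sub_add_cancel] at h
  have he : 2 ≤ exp 1 := by linarith [add_one_le_exp 1]
  exact h.trans (div_le_div_of_nonneg_left hy.le two_pos he)

lemma mul_log_div_sub_add_nonneg {a b : ℝ} (ha : 0 ≤ a) (hb : 0 < b) :
    0 ≤ a * log (a / b) - a + b := by
  have h := mul_nonneg hb.le (InformationTheory.klFun_nonneg (div_nonneg ha hb.le))
  rw [InformationTheory.klFun_apply] at h
  have hab : b * (a / b) = a := mul_div_cancel₀ a hb.ne'
  linarith [show b * (a / b * log (a / b) + 1 - a / b) = a * log (a / b) - a + b by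
    rw [mul_sub, mul_add, ← mul_assoc, hab]; ring]

lemma neg_half_le_mul_log_div {a b : ℝ} (ha : 0 ≤ a) (hb : 0 < b) :
    -(b / 2) ≤ a * log (a / b) := by
  rcases ha.eq_or_lt with rfl | ha
  · simp only [zero_mul, neg_nonpos]; positivity
  · have h : a * log (b / a) ≤ b / 2 :=
      calc a * log (b / a) ≤ a * (b / a / 2) :=
            mul_le_mul_of_nonneg_left (log_le_half_self (div_pos hb ha)) ha.le
        _ = b / 2 := by field_simp
    rw [← inv_div b a, log_inv]
    linarith

section Entropy

variable {n : ℕ} {z x : Fin n → ℝ}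

lemma Dh_nonneg (hz : ∀ i, 0 ≤ z i) (hx : ∀ i, 0 < x i) : 0 ≤ Dh z x :=
  sum_nonneg fun i _ => mul_log_div_sub_add_nonneg (hz i) (hx i)

lemma sum_le_two_mul_Dh_add_l1 (hz : ∀ i, 0 ≤ z i) (hx : ∀ i, 0 < x i) :
    ∑ i, x i ≤ 2 * (Dh z x + l1 z) := by
  rw [Dh, l1, mul_add, mul_sum, mul_sum, ← sum_add_distrib]
  refine sum_le_sum fun i _ => ?_
  linarith [neg_half_le_mul_log_div (hz i) (hx i), le_abs_self (z i)]

lemma sum_abs_sub_le (hz : ∀ i, 0 ≤ z i) (hx : ∀ i, 0 < x i) :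
    ∑ i, |x i - z i| ≤ 3 * (Dh z x + l1 z) :=
  calc ∑ i, |x i - z i| ≤ ∑ i, x i + l1 z := by
        rw [l1, ← sum_add_distrib]
        refine sum_le_sum fun i _ => ?_
        simpa only [abs_of_pos (hx i)] using abs_sub (x i) (z i)
    _ ≤ 3 * (Dh z x + l1 z) := by linarith [sum_le_two_mul_Dh_add_l1 hz hx, Dh_nonneg hz hx]

end Entropy

namespace Matrix

lemma abs_transpose_mulVec_apply_le {ι κ : Type*} [Fintype ι] (A : Matrix ι κ ℝ) (r : ι → ℝ)
    (j : κ) : |(Aᵀ *ᵥ r) j| ≤ ‖WithLp.toLp 2 (Aᵀ j)‖ * ‖WithLp.toLp 2 r‖ :=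
  (congrArg abs (dotProduct_comm (Aᵀ j) r)).trans_le <|
    abs_real_inner_le_norm (WithLp.toLp 2 (Aᵀ j)) (WithLp.toLp 2 r)

lemma norm_toLp_mulVec_le {ι κ : Type*} [Fintype ι] [Fintype κ] (A : Matrix ι κ ℝ)
    (v : κ → ℝ) : ‖WithLp.toLp 2 (A *ᵥ v)‖ ≤ ∑ j, |v j| * ‖WithLp.toLp 2 (Aᵀ j)‖ := by
  have h : WithLp.toLp 2 (A *ᵥ v) = ∑ j, v j • WithLp.toLp 2 (Aᵀ j) := by
    ext i; simp [mulVec, dotProduct, mul_comm]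
  rw [h]
  refine (norm_sum_le _ _).trans_eq ?_
  simp only [norm_smul, Real.norm_eq_abs]

end Matrix

section LeastSquares

variable {m n : ℕ} (A : Matrix (Fin m) (Fin n) ℝ) (b : Fin m → ℝ) (x : Fin n → ℝ)

lemma norm_toLp_transpose_le_colNormMax [NeZero n] (j : Fin n) :
    ‖WithLp.toLp 2 (Aᵀ j)‖ ≤ colNormMax A := by
  rw [EuclideanSpace.norm_eq]
  simp only [Real.norm_eq_abs, sq_abs, transpose_apply]
  exact le_sup' (fun j => √(∑ i, A i j ^ 2)) (mem_univ j)

lemma colNormMax_nonneg [NeZero n] : 0 ≤ colNormMax A :=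
  (norm_nonneg _).trans (norm_toLp_transpose_le_colNormMax A 0)

lemma fobj_eq_half_norm_sq : fobj A b x = ‖WithLp.toLp 2 (A *ᵥ x - b)‖ ^ 2 / 2 := by
  rw [EuclideanSpace.real_norm_sq_eq, fobj]
  ring

lemma abs_gradf_apply_le [NeZero n] (j : Fin n) :
    |gradf A b x j| ≤ colNormMax A * ‖WithLp.toLp 2 (A *ᵥ x - b)‖ :=
  (A.abs_transpose_mulVec_apply_le _ j).trans <|
    mul_le_mul_of_nonneg_right (norm_toLp_transpose_le_colNormMax A j) (norm_nonneg _)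

lemma norm_residual_le [NeZero n] {z : Fin n → ℝ} (hz : ∀ i, 0 ≤ z i) (hzsol : A *ᵥ z = b)
    (hx : ∀ i, 0 < x i) :
    ‖WithLp.toLp 2 (A *ᵥ x - b)‖ ≤ colNormMax A * (3 * (Dh z x + l1 z)) :=
  calc ‖WithLp.toLp 2 (A *ᵥ x - b)‖ = ‖WithLp.toLp 2 (A *ᵥ (x - z))‖ := by
        rw [mulVec_sub, hzsol]
    _ ≤ ∑ j, |x j - z j| * ‖WithLp.toLp 2 (Aᵀ j)‖ := A.norm_toLp_mulVec_le _
    _ ≤ ∑ j, |x j - z j| * colNormMax A := by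
        gcongr with j; exact norm_toLp_transpose_le_colNormMax A j
    _ ≤ colNormMax A * (3 * (Dh z x + l1 z)) := by
        rw [← sum_mul, mul_comm]
        exact mul_le_mul_of_nonneg_left (sum_abs_sub_le hz hx) (colNormMax_nonneg A)

end LeastSquares

section Norms

variable {n : ℕ} {x v : Fin n → ℝ}

lemma wnormSq_pos (hx : ∀ i, 0 < x i) (hv : v ≠ 0) : 0 < wnormSq x v := by
  obtain ⟨j, hj⟩ := Function.ne_iff.1 hv
  exact sum_pos' (fun i _ => mul_nonneg (hx i).le (sq_nonneg _))
    ⟨j, mem_univ _, mul_pos (hx j) (pow_two_pos_of_ne_zero hj)⟩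

lemma wnormSq_le_of_abs_le {c : ℝ} (hx : ∀ i, 0 ≤ x i) (hv : ∀ i, |v i| ≤ c) :
    wnormSq x v ≤ (∑ i, x i) * c ^ 2 := by
  rw [wnormSq, sum_mul]
  refine sum_le_sum fun i _ => mul_le_mul_of_nonneg_left ?_ (hx i)
  exact sq_abs (v i) ▸ pow_le_pow_left₀ (abs_nonneg _) (hv i) 2

lemma linfty_pos [NeZero n] (hv : v ≠ 0) : 0 < linfty v := by
  obtain ⟨j, hj⟩ := Function.ne_iff.1 hv
  exact (abs_pos.2 hj).trans_le (le_sup' (fun i => |v i|) (mem_univ j))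

end Norms

theorem polyakStep_lower_bound_general {m n : ℕ} [NeZero n]
    (A : Matrix (Fin m) (Fin n) ℝ) (b : Fin m → ℝ)
    (z : Fin n → ℝ) (hz : ∀ i, 0 ≤ z i) (hzsol : A.mulVec z = b)
    (x : Fin n → ℝ) (hx : ∀ i, 0 < x i) (hgrad : gradf A b x ≠ 0) :
    polyakStep A b x ≥ 1 / (4 * (colNormMax A) ^ 2 * (Dh z x + l1 z)) := by
  set S := Dh z x + l1 z
  set C := colNormMax A
  set R := ‖WithLp.toLp 2 (A *ᵥ x - b)‖
  have hgrad_le (j : Fin n) : |gradf A b x j| ≤ 3 * C ^ 2 * S := by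
    have := mul_le_mul_of_nonneg_left (norm_residual_le A b x hz hzsol hx) (colNormMax_nonneg A)
    linarith [abs_gradf_apply_le A b x j]
  have hL : linfty (gradf A b x) ≤ 3 * C ^ 2 * S := sup'_le _ _ fun j _ => hgrad_le j
  have hW : wnormSq x (gradf A b x) ≤ 4 * C ^ 2 * S * fobj A b x :=
    calc wnormSq x (gradf A b x) ≤ (∑ i, x i) * (C * R) ^ 2 :=
          wnormSq_le_of_abs_le (fun i => (hx i).le) (abs_gradf_apply_le A b x)
      _ ≤ 2 * S * (C * R) ^ 2 := by gcongr; exact sum_le_two_mul_Dh_add_l1 hz hx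
      _ = 4 * C ^ 2 * S * fobj A b x := by rw [fobj_eq_half_norm_sq]; ring
  have hLpos := linfty_pos hgrad
  have hK : 0 < 4 * C ^ 2 * S := by linarith
  rw [ge_iff_le, polyakStep, le_min_iff, div_le_div_iff₀ hK (wnormSq_pos hx hgrad),
    div_le_div_iff₀ hK hLpos]
  constructor <;> linarith

/-- Lower bound on the Polyak-type stepsize: for `A ≠ 0`, `z ∈ S₊`, `x ∈ ℝⁿ₊₊`
with `∇f(x) ≠ 0`, one has `α ≥ 1 / (4 C_A² (D_h(z,x) + ‖z‖₁))`, where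
`C_A = max_j ‖A_{:j}‖₂`. -/
theorem polyakStep_lower_bound {m n : ℕ} [NeZero n]
    (A : Matrix (Fin m) (Fin n) ℝ) (hA : A ≠ 0) (b : Fin m → ℝ)
    (z : Fin n → ℝ) (hz : ∀ i, 0 ≤ z i) (hzsol : A.mulVec z = b)
    (x : Fin n → ℝ) (hx : ∀ i, 0 < x i) (hgrad : gradf A b x ≠ 0) :
    polyakStep A b x ≥ 1 / (4 * (colNormMax A) ^ 2 * (Dh z x + l1 z)) :=
  polyakStep_lower_bound_general A b z hz hzsol x hx hgrad
end
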